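/- Let p be a prime, α ≥ 1, m ≥ 1, and let M be the ring of m×m matrices over Z/p^α whose entries on or below the main diagonal are multiples of p. Then M is nilpotent: the product of any mα matrices from M is the zero matrix. -/

import Mathlib

lemma key_dvd_prod_entry (p α m : ℕ)
    (L : List (Matrix (Fin m) (Fin m) (ZMod (p ^ α))))
    (hL : ∀ B ∈ L, ∀ i j : Fin m, (j : ℕ) ≤ i → (p : ZMod (p ^ α)) ∣ B i j) :
    ∀ t : ℕ, ∀ i j : Fin m, (j : ℕ) + m * t < L.length + i + m →
      (p : ZMod (p ^ α)) ^ t ∣ L.prod i j := by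
  induction L with
  | nil =>
    intro t i j ht
    cases t with
    | zero => simpa using one_dvd _
    | succ s =>
      simp only [List.prod_nil, List.length_nil] at ht ⊢
      have hij : i ≠ j := by
        intro h
        subst h
        have : m * (s + 1) = m * s + m := by ring
        omega
      rw [Matrix.one_apply_ne hij]
      exact dvd_zero _
  | cons B L ih =>
    intro t i j ht
    simp only [List.prod_cons, List.length_cons] at ht ⊢
    rw [Matrix.mul_apply]
    apply Finset.dvd_sum
    intro l _
    by_cases hl : (l : ℕ) ≤ i
    · cases t with
      | zero => simpa using one_dvd _
      | succ s =>
        have h1 : (p : ZMod (p ^ α)) ∣ B i l := hL B (by simp) i l hl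
        have h2 : (p : ZMod (p ^ α)) ^ s ∣ L.prod l j := by
          apply ih (fun C hC => hL C (by simp [hC])) s l j
          have := i.isLt
          have : m * (s + 1) = m * s + m := by ring
          omega
        rw [pow_succ']
        exact mul_dvd_mul h1 h2
    · have h2 : (p : ZMod (p ^ α)) ^ t ∣ L.prod l j := by
        apply ih (fun C hC => hL C (by simp [hC])) t l j
        omega
      exact Dvd.dvd.mul_left h2 _

theorem nilpotent_matrix_ring_nilpotent
    (p : ℕ) (hp : p.Prime) (α : ℕ) (hα : 1 ≤ α) (m : ℕ) (hm : 1 ≤ m)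
    (A : Fin (m * α) → Matrix (Fin m) (Fin m) (ZMod (p ^ α)))
    (hA : ∀ k, ∀ i j : Fin m, j ≤ i →
      ∃ a : ZMod (p ^ α), A k i j = (p : ZMod (p ^ α)) * a) :
    (List.ofFn A).prod = 0 := by
  ext i j
  have hdvd : (p : ZMod (p ^ α)) ^ α ∣ (List.ofFn A).prod i j := by
    apply key_dvd_prod_entry p α m (List.ofFn A)
    · intro B hB i j hij
      obtain ⟨k, rfl⟩ := List.mem_ofFn.mp hB
      obtain ⟨a, ha⟩ := hA k i j hij
      exact ⟨a, ha⟩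
    · rw [List.length_ofFn]
      have := i.isLt
      have := j.isLt
      omega
  have hz : (p : ZMod (p ^ α)) ^ α = 0 := by
    rw [← Nat.cast_pow, ZMod.natCast_self]
  obtain ⟨c, hc⟩ := hdvd
  simp [hc, hz]
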